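/- Let 0 ≤ μ < 1, let e₁, e₂ > 0, and let A > 0. Suppose a nonnegative function φ defined for small positive r satisfies φ(r) ≤ A (r^{e₁} φ(r)^μ + r^{e₂}) for all sufficiently small r > 0. Then there exists a constant C > 0 such that φ(r) ≤ C r^{min(e₂, e₁/(1-μ))} for all sufficiently small r > 0. -/

import Mathlib

/-!
Pointwise, `x ≤ a x^μ + b` forces one of the two terms to carry at least half of the bound:
either `x ≤ 2b`, or `x ≤ 2a x^μ`, and dividing by `x^μ` the latter gives `x ≤ (2a)^(1/(1-μ))`.
With `a = A r^e₁` and `b = A r^e₂` this is `φ r ≤ (2A)^(1/(1-μ)) r^(e₁/(1-μ)) + 2A r^e₂`,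
and for `r ≤ 1` both powers of `r` are at most `r^β` since `β` is the smaller exponent.
-/

open Real

theorem le_rpow_inv_one_sub_of_le_mul_rpow {x c μ : ℝ} (hx : 0 ≤ x) (hc : 0 ≤ c) (hμ : μ < 1)
    (h : x ≤ c * x ^ μ) : x ≤ c ^ (1 - μ)⁻¹ := by
  rcases hx.eq_or_lt with rfl | hx
  · positivity
  have hpow : x ^ (1 - μ) ≤ c := by
    rwa [rpow_sub hx, rpow_one, div_le_iff₀ (by positivity)]
  calc x = (x ^ (1 - μ)) ^ (1 - μ)⁻¹ := by
        rw [← rpow_mul hx.le, mul_inv_cancel₀ (sub_pos.2 hμ).ne', rpow_one]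
    _ ≤ c ^ (1 - μ)⁻¹ := rpow_le_rpow (by positivity) hpow (inv_nonneg.2 (sub_pos.2 hμ).le)

theorem le_rpow_add_of_le_mul_rpow_add {x a b μ : ℝ} (hx : 0 ≤ x) (ha : 0 ≤ a) (hb : 0 ≤ b)
    (hμ : μ < 1) (h : x ≤ a * x ^ μ + b) : x ≤ (2 * a) ^ (1 - μ)⁻¹ + 2 * b := by
  rcases le_total (a * x ^ μ) b with hsmall | hlarge
  · have : 0 ≤ (2 * a) ^ (1 - μ)⁻¹ := by positivity
    linarith
  · have hx' : x ≤ 2 * a * x ^ μ := by linarith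
    linarith [le_rpow_inv_one_sub_of_le_mul_rpow hx (by positivity) hμ hx']

theorem asymptotic_bound_of_sublinear_general (μ e₁ e₂ A : ℝ) (φ : ℝ → ℝ)
    (hμ1 : μ < 1) (hA : 0 < A)
    (hφ : ∃ r₀ > 0, ∀ r, 0 < r → r < r₀ →
      0 ≤ φ r ∧ φ r ≤ A * (r ^ e₁ * (φ r) ^ μ + r ^ e₂)) :
    ∃ C > 0, ∃ r₁ > 0, ∀ r, 0 < r → r < r₁ →
      φ r ≤ C * r ^ (min e₂ (e₁ / (1 - μ))) := by
  obtain ⟨r₀, hr₀, h⟩ := hφ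
  set β := min e₂ (e₁ / (1 - μ))
  set K := (2 * A) ^ (1 - μ)⁻¹
  refine ⟨K + 2 * A, by positivity, min r₀ 1, by positivity, fun r hr hr₁ => ?_⟩
  have hr1 : r ≤ 1 := (hr₁.trans_le (min_le_right _ _)).le
  obtain ⟨hφ0, hφr⟩ := h r hr (hr₁.trans_le (min_le_left _ _))
  have hsplit : φ r ≤ K * r ^ (e₁ / (1 - μ)) + 2 * A * r ^ e₂ := by
    have key := le_rpow_add_of_le_mul_rpow_add hφ0 (by positivity : 0 ≤ A * r ^ e₁)
      (by positivity : 0 ≤ A * r ^ e₂) hμ1 (by linarith)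
    rwa [← mul_assoc, mul_rpow (by positivity) (by positivity), ← rpow_mul hr.le,
      ← div_eq_mul_inv, ← mul_assoc] at key
  have h₁ : r ^ (e₁ / (1 - μ)) ≤ r ^ β := rpow_le_rpow_of_exponent_ge hr hr1 (min_le_right _ _)
  have h₂ : r ^ e₂ ≤ r ^ β := rpow_le_rpow_of_exponent_ge hr hr1 (min_le_left _ _)
  calc φ r ≤ K * r ^ (e₁ / (1 - μ)) + 2 * A * r ^ e₂ := hsplit
    _ ≤ K * r ^ β + 2 * A * r ^ β := by gcongr
    _ = (K + 2 * A) * r ^ β := by ring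

theorem asymptotic_bound_of_sublinear (μ e₁ e₂ A : ℝ) (φ : ℝ → ℝ)
    (hμ0 : 0 ≤ μ) (hμ1 : μ < 1) (he₁ : 0 < e₁) (he₂ : 0 < e₂) (hA : 0 < A)
    (hφ : ∃ r₀ > 0, ∀ r, 0 < r → r < r₀ →
      0 ≤ φ r ∧ φ r ≤ A * (r ^ e₁ * (φ r) ^ μ + r ^ e₂)) :
    ∃ C > 0, ∃ r₁ > 0, ∀ r, 0 < r → r < r₁ →
      φ r ≤ C * r ^ (min e₂ (e₁ / (1 - μ))) :=
  asymptotic_bound_of_sublinear_general μ e₁ e₂ A φ hμ1 hA hφ
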